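/- Let G be a group and H a subgroup of G. Then for all natural numbers j ≤ k, C_{E_k(H)}^{j}(H) = Z_j(E_k(H)). -/

import Mathlib

open scoped commutatorElement

/-- Iterated centralizer `C_S^k(A)` of the subset `A` inside the ambient (sub)group
given by the set `S`, following Bryant: `C^0 = {1}` and
`C^{k+1}(A) = {x ∈ ⋂_{n ≤ k} N_S(C^n(A)) | [x, a] ∈ C^k(A) for all a ∈ A}`. -/
def iterCent {G : Type*} [Group G] (S A : Set G) : ℕ → Set G
  | 0 => {1}
  | k + 1 =>
    {x | x ∈ S ∧
      (∀ n, n ≤ k → ∀ h ∈ S, (x * h * x⁻¹ ∈ iterCent S A n ↔ h ∈ iterCent S A n)) ∧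
      ∀ a ∈ A, ⁅x, a⁆ ∈ iterCent S A k}
  termination_by n => n
  decreasing_by all_goals omega

/-- The `E_k`-envelopes of a subgroup (given as the set `H`) in `G`:
`E_0(H) = G` and `E_{k+1}(H) = {g ∈ E_k(H) | [g, C_{E_k(H)}^{k+1}(H)] ⊆ C_{E_k(H)}^k(H)}`. -/
def env {G : Type*} [Group G] (H : Set G) : ℕ → Set G
  | 0 => Set.univ
  | k + 1 =>
    {g | g ∈ env H k ∧
      ∀ c ∈ iterCent (env H k) H (k + 1), ⁅g, c⁆ ∈ iterCent (env H k) H k}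

/-- The upper central series `Z_k` of the (sub)group given by the set `S`:
`Z_0 = {1}` and `Z_{k+1} = {x ∈ S | [x, g] ∈ Z_k for all g ∈ S}`. -/
def upperCent {G : Type*} [Group G] (S : Set G) : ℕ → Set G
  | 0 => {1}
  | k + 1 => {x | x ∈ S ∧ ∀ g ∈ S, ⁅x, g⁆ ∈ upperCent S k}

/-! By induction on `k`, `E_k(H)` is a subgroup containing `H` in which commutators with `H`
detect the upper central series up to level `k`: for `j < k`, an element `x` with
`[x, H] ⊆ Z_j` lies in `Z_{j+1}`. Since every `Z_n` is normal, the normalizer conditions in the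
definition of `C^{j+1}` are then automatic, and `C^j(H) = Z_j` follows level by level.
For the inductive step, `E_{k+1}` contains `H` and `Z_k(E_k)`, so detection by `H` forces its
upper central series to agree with that of `E_k` up to level `k`; at level `k`, an element with
`[x, H] ⊆ Z_k` lies in `C^{k+1}_{E_k}(H)`, which `E_{k+1}` centralizes modulo `Z_k` by
definition. -/

section

variable {G : Type*} [Group G]

theorem mem_upperCent_succ {S : Set G} {j : ℕ} {x : G} :
    x ∈ upperCent S (j + 1) ↔ x ∈ S ∧ ∀ g ∈ S, ⁅x, g⁆ ∈ upperCent S j :=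
  Iff.rfl

theorem upperCent_subset (S : Subgroup G) : ∀ j, upperCent (S : Set G) j ⊆ S
  | 0 => Set.singleton_subset_iff.2 S.one_mem
  | _ + 1 => fun _ hx => hx.1

theorem coe_mem_upperCent_iff (S : Subgroup G) (j : ℕ) (x : S) :
    (x : G) ∈ upperCent (S : Set G) j ↔ x ∈ Subgroup.upperCentralSeries S j := by
  induction j generalizing x with
  | zero => simp [upperCent]
  | succ j ih =>
    rw [mem_upperCent_succ, Subgroup.mem_upperCentralSeries_succ_iff]
    exact ⟨fun h y => (ih _).1 (h.2 y y.2), fun h => ⟨x.2, fun g hg => (ih _).2 (h ⟨g, hg⟩)⟩⟩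

def upperCentSubgroup (S : Subgroup G) (j : ℕ) : Subgroup G :=
  (Subgroup.upperCentralSeries S j).map S.subtype

theorem coe_upperCentSubgroup (S : Subgroup G) (j : ℕ) :
    (upperCentSubgroup S j : Set G) = upperCent S j := by
  ext x
  constructor
  · rintro ⟨y, hy, rfl⟩
    exact (coe_mem_upperCent_iff S j y).2 hy
  · intro hx
    exact ⟨⟨x, upperCent_subset S j hx⟩, (coe_mem_upperCent_iff S j _).1 hx, rfl⟩

theorem mem_upperCentSubgroup {S : Subgroup G} {j : ℕ} {x : G} :
    x ∈ upperCentSubgroup S j ↔ x ∈ upperCent (S : Set G) j := by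
  rw [← SetLike.mem_coe, coe_upperCentSubgroup]

theorem upperCent_mono (S : Subgroup G) : Monotone (upperCent (S : Set G)) := by
  intro i j hij
  simp only [← coe_upperCentSubgroup]
  exact Subgroup.map_mono (Subgroup.upperCentralSeries_mono _ hij)

theorem le_normalizer_upperCentSubgroup (S : Subgroup G) (j : ℕ) :
    S ≤ Subgroup.normalizer (upperCentSubgroup S j : Set G) :=
  calc S = (⊤ : Subgroup S).map S.subtype := by rw [← MonoidHom.range_eq_map, S.range_subtype]
    _ = (Subgroup.normalizer (Subgroup.upperCentralSeries S j : Set S)).map S.subtype := by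
      rw [Subgroup.normalizer_eq_top]
    _ ≤ _ := Subgroup.le_normalizer_map S.subtype

theorem conj_mem_upperCent_iff {S : Subgroup G} {j : ℕ} {s x : G} (hs : s ∈ S) :
    s * x * s⁻¹ ∈ upperCent (S : Set G) j ↔ x ∈ upperCent (S : Set G) j := by
  rw [← mem_upperCentSubgroup, ← mem_upperCentSubgroup]
  exact (Subgroup.mem_normalizer_iff.1 (le_normalizer_upperCentSubgroup S j hs) x).symm

def relCentralizer (S N : Subgroup G) (hN : S ≤ Subgroup.normalizer (N : Set G)) (D : Set G) :
    Subgroup G where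
  carrier := {g | g ∈ S ∧ ∀ c ∈ D, ⁅g, c⁆ ∈ N}
  one_mem' := ⟨S.one_mem, fun c _ => by rw [commutatorElement_one_left]; exact N.one_mem⟩
  mul_mem' := by
    rintro x y ⟨hx, hxD⟩ ⟨hy, hyD⟩
    refine ⟨S.mul_mem hx hy, fun c hc => ?_⟩
    rw [commutatorElement_mul_left_eq_conj_mul]
    exact N.mul_mem ((Subgroup.mem_normalizer_iff.1 (hN hx) _).1 (hyD c hc)) (hxD c hc)
  inv_mem' := by
    rintro x ⟨hx, hxD⟩
    refine ⟨S.inv_mem hx, fun c hc => ?_⟩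
    have := (Subgroup.mem_normalizer_iff.1 (hN (S.inv_mem hx)) _).1 (N.inv_mem (hxD c hc))
    rwa [commutatorElement_inv, inv_inv, ← commutatorElement_inv_left] at this

theorem iterCent_zero (S A : Set G) : iterCent S A 0 = {1} := by
  rw [iterCent]

theorem mem_iterCent_succ {S A : Set G} {j : ℕ} {x : G} :
    x ∈ iterCent S A (j + 1) ↔ x ∈ S ∧
      (∀ n ≤ j, ∀ h ∈ S, (x * h * x⁻¹ ∈ iterCent S A n ↔ h ∈ iterCent S A n)) ∧
      ∀ a ∈ A, ⁅x, a⁆ ∈ iterCent S A j := by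
  rw [iterCent]
  rfl

theorem iterCent_succ_of_eq_upperCent {S : Subgroup G} {A : Set G} {j : ℕ}
    (h : ∀ n ≤ j, iterCent S A n = upperCent S n) :
    iterCent S A (j + 1) = {x | x ∈ S ∧ ∀ a ∈ A, ⁅x, a⁆ ∈ upperCent (S : Set G) j} := by
  ext x
  rw [mem_iterCent_succ, h j le_rfl]
  refine ⟨fun hx => ⟨hx.1, hx.2.2⟩, fun hx => ⟨hx.1, fun n hn g _ => ?_, hx.2⟩⟩
  rw [h n hn]
  exact conj_mem_upperCent_iff hx.1

def DetectsUpperCent (S A : Set G) (k : ℕ) : Prop :=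
  ∀ j < k, ∀ x ∈ S, (∀ a ∈ A, ⁅x, a⁆ ∈ upperCent S j) → x ∈ upperCent S (j + 1)

theorem iterCent_eq_upperCent_iff {S : Subgroup G} {A : Set G} (hA : A ⊆ S) {k : ℕ} :
    (∀ j ≤ k, iterCent S A j = upperCent S j) ↔ DetectsUpperCent S A k := by
  refine ⟨fun h j hj x hx hxA => ?_, fun hdet => ?_⟩
  · rw [← h (j + 1) hj, iterCent_succ_of_eq_upperCent fun n hn => h n (by omega)]
    exact ⟨hx, hxA⟩
  induction k with
  | zero =>
    intro j hj
    rw [Nat.le_zero.1 hj, iterCent_zero]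
    rfl
  | succ k ih =>
    have h := ih fun j hj => hdet j (by omega)
    intro j hj
    rcases Nat.le_add_one_iff.1 hj with hj | rfl
    · exact h j hj
    rw [iterCent_succ_of_eq_upperCent h]
    ext x
    exact ⟨fun hx => hdet k (lt_add_one k) x hx.1 hx.2,
      fun hx => ⟨hx.1, fun a ha => hx.2 a (hA ha)⟩⟩

theorem upperCent_eq_of_detectsUpperCent {S T : Subgroup G} {A : Set G} {k : ℕ} (hTS : T ≤ S)
    (hAT : A ⊆ T) (hZT : upperCent (S : Set G) k ⊆ T) (hdet : DetectsUpperCent S A k) :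
    ∀ j ≤ k, upperCent (T : Set G) j = upperCent S j := by
  intro j hj
  induction j with
  | zero => rfl
  | succ j ih =>
    ext x
    rw [mem_upperCent_succ, mem_upperCent_succ, ih (by omega)]
    exact ⟨fun hx => hdet j hj x (hTS hx.1) fun a ha => hx.2 a (hAT ha),
      fun hx => ⟨hZT (upperCent_mono S hj hx), fun g hg => hx.2 g (hTS hg)⟩⟩

def envStep (S : Subgroup G) (A : Set G) (k : ℕ) : Subgroup G :=
  relCentralizer S (upperCentSubgroup S k) (le_normalizer_upperCentSubgroup S k)
    {x | x ∈ S ∧ ∀ a ∈ A, ⁅x, a⁆ ∈ upperCent (S : Set G) k}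

theorem envStep_le (S : Subgroup G) (A : Set G) (k : ℕ) : envStep S A k ≤ S :=
  fun _ hg => hg.1

theorem subset_envStep {S : Subgroup G} {A : Set G} (hA : A ⊆ S) (k : ℕ) :
    A ⊆ envStep S A k := by
  refine fun a ha => ⟨hA ha, fun c hc => ?_⟩
  rw [← commutatorElement_inv]
  exact inv_mem (mem_upperCentSubgroup.2 (hc.2 a ha))

theorem upperCent_subset_envStep (S : Subgroup G) (A : Set G) (k : ℕ) :
    upperCent (S : Set G) k ⊆ envStep S A k := by
  intro z hz
  refine ⟨upperCent_subset S k hz, fun c hc => ?_⟩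
  rw [← mem_upperCentSubgroup] at hz
  have hconj : c * z⁻¹ * c⁻¹ ∈ upperCent (S : Set G) k :=
    (conj_mem_upperCent_iff hc.1).2 (mem_upperCentSubgroup.1 (inv_mem hz))
  rw [commutatorElement_def, mul_assoc, mul_assoc, ← mul_assoc c]
  exact mul_mem hz (mem_upperCentSubgroup.2 hconj)

theorem DetectsUpperCent.envStep {S : Subgroup G} {A : Set G} {k : ℕ} (hA : A ⊆ S)
    (hdet : DetectsUpperCent S A k) : DetectsUpperCent (envStep S A k) A (k + 1) := by
  have hZ := upperCent_eq_of_detectsUpperCent (envStep_le S A k) (subset_envStep hA k)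
    (upperCent_subset_envStep S A k) hdet
  intro j hj x hxT hx
  rw [hZ j (by omega)] at hx
  rcases Nat.lt_add_one_iff.1 hj |>.lt_or_eq with hj | rfl
  · rw [hZ (j + 1) hj]
    exact hdet j hj x (envStep_le S A k hxT) hx
  · refine ⟨hxT, fun g hg => ?_⟩
    rw [hZ _ le_rfl, ← commutatorElement_inv]
    exact mem_upperCentSubgroup.1 (inv_mem (hg.2 x ⟨envStep_le S A _ hxT, hx⟩))

theorem env_succ_eq_envStep {H : Set G} {S : Subgroup G} {k : ℕ} (hS : (S : Set G) = env H k)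
    (h : ∀ j ≤ k, iterCent S H j = upperCent S j) : env H (k + 1) = envStep S H k := by
  rw [env, ← hS, iterCent_succ_of_eq_upperCent h, h k le_rfl]
  ext g
  simp only [envStep, relCentralizer, mem_upperCentSubgroup]
  rfl

theorem exists_subgroup_eq_env (H : Subgroup G) (k : ℕ) :
    ∃ S : Subgroup G,
      (S : Set G) = env H k ∧ (H : Set G) ⊆ S ∧ DetectsUpperCent S (H : Set G) k := by
  induction k with
  | zero => exact ⟨⊤, by rw [env]; rfl, Set.subset_univ _, fun j hj => absurd hj (by omega)⟩
  | succ k ih =>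
    obtain ⟨S, hS, hHS, hdet⟩ := ih
    exact ⟨envStep S H k,
      (env_succ_eq_envStep hS ((iterCent_eq_upperCent_iff hHS).2 hdet)).symm,
      subset_envStep hHS k, hdet.envStep hHS⟩

end

/-- For all `j ≤ k`, `C_(E_k(H))^j(H) = Z_j(E_k(H))`. -/
theorem iterCent_env_eq_upperCent {G : Type*} [Group G] (H : Subgroup G) (j k : ℕ)
    (hjk : j ≤ k) :
    iterCent (env (H : Set G) k) (H : Set G) j = upperCent (env (H : Set G) k) j := by
  obtain ⟨S, hS, hHS, hdet⟩ := exists_subgroup_eq_env H k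
  rw [← hS]
  exact (iterCent_eq_upperCent_iff hHS).2 hdet j hjk
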